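/- In the polynomial ring K[T_1,...,T_6] over a field K, let J = (T_3T_5 - T_4^2, T_1T_4, T_1T_5, T_1T_6, T_3T_6, T_4T_6), and let F_1 = T_3T_5 - T_4^2, G_1 = T_1T_5 + T_3T_6, G_2 = T_1T_6. Then J = √(F_1, G_1, G_2). -/

import Mathlib

/-!
Indices are 0-based: `X i` stands for `T_{i+1}`.

Each generator of `J` has a power in `I` by an explicit identity. Conversely, `I` lies in the
monomial primes `P = (X₀, X₂, X₃)` and `Q = (X₃, X₄, X₅)`, so every `f ∈ √I` lies in both. With
`g = f(X₅ = 0)` and `h = g(X₀ = 0)`, primality of `P` and `Q` gives `f - g ∈ X₅ P` and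
`g - h ∈ X₀ Q`, both inside `J`; and a power of `h` lies in `I(X₀ = X₅ = 0) = (F₁)`, which is
prime because `F₁` is linear in `X₄` with coprime coefficients, so `h ∈ (F₁) ⊆ J`.
-/

open MvPolynomial

namespace MvPolynomial

variable {σ R : Type*} [CommRing R]

noncomputable def killVars (s : Set σ) : MvPolynomial σ R →ₐ[R] MvPolynomial σ R :=
  aeval (sᶜ.indicator X)

theorem killVars_X_of_mem {s : Set σ} {i : σ} (hi : i ∈ s) :
    killVars s (X i : MvPolynomial σ R) = 0 := by
  simp [killVars, hi]

theorem killVars_X_of_notMem {s : Set σ} {i : σ} (hi : i ∉ s) :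
    killVars s (X i : MvPolynomial σ R) = X i := by
  simp [killVars, hi]

theorem sub_killVars_mem_span_X_image (s : Set σ) (f : MvPolynomial σ R) :
    f - killVars s f ∈ Ideal.span (X '' s) := by
  induction f using MvPolynomial.induction_on with
  | C a => simp [killVars]
  | add p q hp hq => simpa only [map_add, add_sub_add_comm] using add_mem hp hq
  | mul_X p i hp =>
    have hX : X i - killVars s (X i : MvPolynomial σ R) ∈ Ideal.span (X '' s) := by
      by_cases hi : i ∈ s
      · simpa [killVars_X_of_mem hi] using Ideal.subset_span (Set.mem_image_of_mem X hi)
      · simp [killVars_X_of_notMem hi]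
    rw [show p * X i - killVars s (p * X i) =
        (p - killVars s p) * X i + killVars s p * (X i - killVars s (X i)) by rw [map_mul]; ring]
    exact add_mem (Ideal.mul_mem_right _ _ hp) (Ideal.mul_mem_left _ _ hX)

theorem ker_killVars (s : Set σ) :
    RingHom.ker (killVars s : MvPolynomial σ R →ₐ[R] _) = Ideal.span (X '' s) := by
  refine le_antisymm (fun f hf => ?_) (Ideal.span_le.2 ?_)
  · simpa [RingHom.mem_ker.1 hf] using sub_killVars_mem_span_X_image s f
  · rintro _ ⟨i, hi, rfl⟩
    exact killVars_X_of_mem hi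

theorem isPrime_span_X_image [IsDomain R] (s : Set σ) :
    (Ideal.span (X '' s : Set (MvPolynomial σ R))).IsPrime :=
  ker_killVars (R := R) s ▸ RingHom.ker_isPrime _

theorem X_notMem_span_X_image [Nontrivial R] {s : Set σ} {i : σ} (hi : i ∉ s) :
    (X i : MvPolynomial σ R) ∉ Ideal.span (X '' s) := by
  rw [← ker_killVars, RingHom.mem_ker]
  simp [killVars_X_of_notMem hi]

theorem killVars_mem_span_X_image (t : Set σ) {s : Set σ} {f : MvPolynomial σ R}
    (hf : f ∈ Ideal.span (X '' s)) : killVars t f ∈ Ideal.span (X '' s) := by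
  suffices Ideal.span (X '' s) ≤ (Ideal.span (X '' s)).comap (killVars t) from this hf
  refine Ideal.span_le.2 ?_
  rintro _ ⟨i, hi, rfl⟩
  by_cases hit : i ∈ t
  · simp [killVars_X_of_mem hit]
  · simpa [killVars_X_of_notMem hit] using Ideal.subset_span (Set.mem_image_of_mem X hi)

theorem prime_X [IsDomain R] (i : σ) : Prime (X i : MvPolynomial σ R) := by
  refine (Ideal.span_singleton_prime (X_ne_zero i)).1 ?_
  simpa using isPrime_span_X_image (R := R) {i}

theorem sub_killVars_singleton_mem_span_mul [IsDomain R] {s : Set σ} {i : σ} (hi : i ∉ s)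
    {f : MvPolynomial σ R} (hf : f ∈ Ideal.span (X '' s)) :
    f - killVars {i} f ∈ Ideal.span {(X i : MvPolynomial σ R)} * Ideal.span (X '' s) := by
  have hfi : f - killVars {i} f ∈ Ideal.span (X '' {i}) :=
    sub_killVars_mem_span_X_image {i} f
  rw [Set.image_singleton] at hfi
  obtain ⟨b, hb⟩ := Ideal.mem_span_singleton'.1 hfi
  have hP := isPrime_span_X_image (R := R) s
  have hxb : b * X i ∈ Ideal.span (X '' s) := hb ▸ sub_mem hf (killVars_mem_span_X_image _ hf)
  have hbP : b ∈ Ideal.span (X '' s) :=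
    (hP.mem_or_mem hxb).resolve_right (X_notMem_span_X_image hi)
  rw [← hb, mul_comm b]
  exact Ideal.mul_mem_mul (Ideal.mem_span_singleton_self _) hbP

theorem prime_X_mul_X_sub_X_sq {D : Type*} [CommRing D] [IsDomain D]
    [UniqueFactorizationMonoid D] {i j k : σ} (hij : i ≠ j) (hik : i ≠ k) (hkj : k ≠ j) :
    Prime (X i * X j - X k ^ 2 : MvPolynomial σ D) := by
  classical
  set e := (renameEquiv D (Equiv.optionSubtypeNe j).symm).trans (optionEquivLeft D {b // b ≠ j})
  have he : e (X i * X j - X k ^ 2) =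
      Polynomial.C (X ⟨i, hij⟩) * Polynomial.X + Polynomial.C (-X ⟨k, hkj⟩ ^ 2) := by
    simp [e, Equiv.optionSubtypeNe_symm_of_ne hij, Equiv.optionSubtypeNe_symm_of_ne hkj,
      sub_eq_add_neg]
  rw [← MulEquiv.prime_iff e.toMulEquiv]
  change Prime (e _)
  rw [he, ← UniqueFactorizationMonoid.irreducible_iff_prime]
  refine Polynomial.irreducible_of_degree_eq_one_of_isRelPrime_coeff
    (Polynomial.degree_linear (X_ne_zero _)) ?_
  have hdvd : ¬ X ⟨i, hij⟩ ∣ (X ⟨k, hkj⟩ ^ 2 : MvPolynomial {b // b ≠ j} D) := fun h =>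
    hik (congrArg Subtype.val (X_dvd_X.1 ((prime_X _).dvd_of_dvd_pow h)))
  simp only [Polynomial.coeff_add, Polynomial.coeff_C_mul_X, Polynomial.coeff_C, if_true,
    one_ne_zero, zero_ne_one, if_false, zero_add, add_zero]
  exact ((prime_X _).irreducible.isRelPrime_iff_not_dvd.2 hdvd).symm.neg_left

end MvPolynomial

namespace FiberConeSTCI

noncomputable abbrev J (K : Type*) [Field K] : Ideal (MvPolynomial (Fin 6) K) :=
  Ideal.span {X 2 * X 4 - (X 3) ^ 2, X 0 * X 3, X 0 * X 4, X 0 * X 5, X 2 * X 5, X 3 * X 5}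

noncomputable abbrev I (K : Type*) [Field K] : Ideal (MvPolynomial (Fin 6) K) :=
  Ideal.span {X 2 * X 4 - (X 3) ^ 2, X 0 * X 4 + X 2 * X 5, X 0 * X 5}

variable {K : Type*} [Field K]

theorem mem_I_of_eq {p : MvPolynomial (Fin 6) K} (a b c : MvPolynomial (Fin 6) K)
    (hp : p = a * (X 2 * X 4 - X 3 ^ 2) + b * (X 0 * X 4 + X 2 * X 5) + c * (X 0 * X 5)) :
    p ∈ I K := by
  rw [hp]
  refine add_mem (add_mem ?_ ?_) ?_ <;> exact Ideal.mul_mem_left _ _ (Ideal.subset_span (by simp))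

theorem J_le_radical_I : J K ≤ (I K).radical := by
  simp only [J, Ideal.span_le, Set.insert_subset_iff, Set.singleton_subset_iff, SetLike.mem_coe]
  exact ⟨⟨1, mem_I_of_eq 1 0 0 (by ring)⟩,
    ⟨2, mem_I_of_eq (-X 0 ^ 2) (X 0 * X 2) (-X 2 ^ 2) (by ring)⟩,
    ⟨2, mem_I_of_eq 0 (X 0 * X 4) (-X 2 * X 4) (by ring)⟩,
    ⟨1, mem_I_of_eq 0 0 1 (by ring)⟩,
    ⟨2, mem_I_of_eq 0 (X 2 * X 5) (-X 2 * X 4) (by ring)⟩,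
    ⟨2, mem_I_of_eq (-X 5 ^ 2) (X 4 * X 5) (-X 4 ^ 2) (by ring)⟩⟩

theorem I_le_span_X_023 : I K ≤ Ideal.span (X '' {0, 2, 3}) := by
  rw [← ker_killVars, Ideal.span_le]
  simp [Set.insert_subset_iff, killVars_X_of_mem, killVars_X_of_notMem]

theorem I_le_span_X_345 : I K ≤ Ideal.span (X '' {3, 4, 5}) := by
  rw [← ker_killVars, Ideal.span_le]
  simp [Set.insert_subset_iff, killVars_X_of_mem, killVars_X_of_notMem]

theorem span_X_five_mul_le_J : Ideal.span {X 5} * Ideal.span (X '' {0, 2, 3}) ≤ J K := by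
  rw [Ideal.span_mul_span', Ideal.span_le, Set.singleton_mul]
  simp only [Set.image_insert_eq, Set.image_singleton, Set.insert_subset_iff,
    Set.singleton_subset_iff, SetLike.mem_coe]
  refine ⟨?_, ?_, ?_⟩ <;> exact Ideal.subset_span (by simp [mul_comm])

theorem span_X_zero_mul_le_J : Ideal.span {X 0} * Ideal.span (X '' {3, 4, 5}) ≤ J K := by
  rw [Ideal.span_mul_span', Ideal.span_le, Set.singleton_mul]
  simp only [Set.image_insert_eq, Set.image_singleton, Set.insert_subset_iff,
    Set.singleton_subset_iff, SetLike.mem_coe]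
  refine ⟨?_, ?_, ?_⟩ <;> exact Ideal.subset_span (by simp)

theorem killVars_killVars_mem_span_of_mem_I {f : MvPolynomial (Fin 6) K} (hf : f ∈ I K) :
    killVars {0} (killVars {5} f) ∈ Ideal.span {X 2 * X 4 - X 3 ^ 2} := by
  suffices I K ≤ (Ideal.span {X 2 * X 4 - X 3 ^ 2}).comap ((killVars {0}).comp (killVars {5}))
    from this hf
  rw [Ideal.span_le]
  simp [Set.insert_subset_iff, killVars_X_of_mem, killVars_X_of_notMem]

theorem radical_I_le_J : (I K).radical ≤ J K := by
  rintro f ⟨m, hm⟩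
  have hfP := (isPrime_span_X_image _).radical_le_iff.2 I_le_span_X_023 ⟨m, hm⟩
  have hfQ := (isPrime_span_X_image _).radical_le_iff.2 I_le_span_X_345 ⟨m, hm⟩
  set g := killVars {5} f
  have hgQ := killVars_mem_span_X_image {5} hfQ
  have hq : Prime (X 2 * X 4 - X 3 ^ 2 : MvPolynomial (Fin 6) K) :=
    prime_X_mul_X_sub_X_sq (by decide) (by decide) (by decide)
  have hh : killVars {0} g ∈ Ideal.span {X 2 * X 4 - X 3 ^ 2} :=
    ((Ideal.span_singleton_prime hq.ne_zero).2 hq).mem_of_pow_mem m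
      (by simpa only [g, map_pow] using killVars_killVars_mem_span_of_mem_I hm)
  rw [show f = (f - g) + (g - killVars {0} g) + killVars {0} g by ring]
  refine add_mem (add_mem ?_ ?_) ?_
  · exact span_X_five_mul_le_J (sub_killVars_singleton_mem_span_mul (by simp) hfP)
  · exact span_X_zero_mul_le_J (sub_killVars_singleton_mem_span_mul (by simp) hgQ)
  · exact (Ideal.span_singleton_le_iff_mem _).2 (Ideal.subset_span (by simp)) hh

end FiberConeSTCI

/-- In `K[T₁,...,T₆]`, the ideal `J = (T₃T₅ - T₄², T₁T₄, T₁T₅, T₁T₆, T₃T₆, T₄T₆)` equals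
the radical of the ideal generated by `F₁ = T₃T₅ - T₄²`, `G₁ = T₁T₅ + T₃T₆`, `G₂ = T₁T₆`. -/
theorem fiber_cone_stci (K : Type*) [Field K] :
    (Ideal.span ({X 2 * X 4 - (X 3) ^ 2, X 0 * X 3, X 0 * X 4, X 0 * X 5,
        X 2 * X 5, X 3 * X 5} : Set (MvPolynomial (Fin 6) K))) =
      (Ideal.span ({X 2 * X 4 - (X 3) ^ 2, X 0 * X 4 + X 2 * X 5, X 0 * X 5} :
          Set (MvPolynomial (Fin 6) K))).radical :=
  le_antisymm FiberConeSTCI.J_le_radical_I FiberConeSTCI.radical_I_le_J
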